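/- Fix α > 0 and δ ∈ (−1, ∞) with α + δ ≤ 1/2. There is an absolute constant C < ∞ such that for every integer n ≥ 2, with N = ⌊n^{1+α}⌋ and A = n^{-(1-α-δ)}: E₀(L_π²) ≤ exp(C·n^{2δ}). In particular Var₀(L_π) ≤ exp(C·n^{2δ}) − 1. -/

import Mathlib

open MeasureTheory ProbabilityTheory Real Filter Topology

noncomputable section

/-- Law of the N×N Gaussian observation matrix with mean matrix θ and unit variances. -/
def PTheta (N : ℕ) (θ : Fin N → Fin N → ℝ) : Measure (Fin N → Fin N → ℝ) :=
  Measure.pi fun i => Measure.pi fun j => gaussianReal (θ i j) 1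

/-- Parameter space Θ(A, n, N). -/
def ThetaSet (A : ℝ) (n N : ℕ) : Set (Fin N → Fin N → ℝ) :=
  {θ | ∃ R C : Finset (Fin N), R.card = n ∧ C.card = n ∧
    (∀ i j, i ∈ R → j ∈ C → A ≤ θ i j) ∧
    (∀ i j, ¬(i ∈ R ∧ j ∈ C) → θ i j = 0)}

/-- Risk of the test with rejection region `T`: type-I error plus worst-case type-II error. -/
def testRisk (n N : ℕ) (A : ℝ) (T : Set (Fin N → Fin N → ℝ)) : ℝ :=
  (PTheta N 0 T).toReal + ⨆ θ : ThetaSet A n N, (PTheta N θ.1 Tᶜ).toReal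

/-- Minimax risk over all (measurable) tests. -/
def minimaxRisk (n N : ℕ) (A : ℝ) : ℝ :=
  ⨅ T : {T : Set (Fin N → Fin N → ℝ) // MeasurableSet T}, testRisk n N A T.1

/-- The family S of n×n product subsets R×C of [N]×[N]. -/
def SIdx (n N : ℕ) : Type :=
  {p : Finset (Fin N) × Finset (Fin N) // p.1.card = n ∧ p.2.card = n}

instance (n N : ℕ) : Fintype (SIdx n N) := by unfold SIdx; infer_instance

/-- The sum X_S of the entries of x over the product set S = R×C. -/
def XS {n N : ℕ} (S : SIdx n N) (x : Fin N → Fin N → ℝ) : ℝ :=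
  ∑ i ∈ S.1.1, ∑ j ∈ S.1.2, x i j

/-- The integrated likelihood ratio `L_π = (1/|S|) Σ_S exp(A X_S − A²n²/2)`. -/
def Lpi (n N : ℕ) (A : ℝ) (x : Fin N → Fin N → ℝ) : ℝ :=
  (((N.choose n : ℝ)) ^ 2)⁻¹ * ∑ S : SIdx n N, Real.exp (A * XS S x - A ^ 2 * (n : ℝ) ^ 2 / 2)

/-! Expanding the square and using the Gaussian moment generating function,
`E₀(L_π²) = |S|⁻² Σ_{S,T} exp(A² |S ∩ T|)`, and `|R×C ∩ R'×C'| = |R ∩ R'| · |C ∩ C'|`.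
The overlap of two independent uniform `n`-subsets of `[N]` is hypergeometric, and its moment
generating function is dominated by the binomial one:
`Σ_{R,R'} exp(t |R ∩ R'|) ≤ C(N,n)² (1 + (eᵗ - 1) n / N)ⁿ ≤ C(N,n)² exp(q (eᵗ - 1))`,
`q = n² / N`; this follows by writing `exp(t m) = Σ_k C(m,k) (eᵗ - 1)ᵏ` and counting the pairs
`R, R'` containing a fixed `k`-set. Applied to the columns with `t = A² |R ∩ R'| ≤ A² n ≤ 1`,
where `eᵗ - 1 ≤ e t`, and then to the rows, it gives `E₀(L_π²) ≤ exp(q (e^{e A² q} - 1))`.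
In the regime `N ≈ n^{1+α}` one has `q ≤ 2 n^{1-α}`, `A² q ≤ 2` and `A² q² ≤ 4 n^{2δ}`. -/

open Finset

section PiIntegral

variable {ι E : Type*} [Fintype ι] [MeasurableSpace E] {μ : ι → Measure E} [∀ i, SigmaFinite (μ i)]

lemma integrable_exp_sum_pi {f : ι → E → ℝ} (hf : ∀ i, Integrable (fun y => exp (f i y)) (μ i)) :
    Integrable (fun x : ι → E => exp (∑ i, f i (x i))) (Measure.pi μ) := by
  simp_rw [Real.exp_sum]
  exact Integrable.fintype_prod hf

lemma integral_exp_sum_pi (f : ι → E → ℝ) :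
    ∫ x : ι → E, exp (∑ i, f i (x i)) ∂(Measure.pi μ) = ∏ i, ∫ y, exp (f i y) ∂(μ i) := by
  simp_rw [Real.exp_sum]
  exact integral_fintype_prod_eq_prod fun i y => exp (f i y)

end PiIntegral

lemma integral_exp_mul_gaussianReal_zero_one (t : ℝ) :
    ∫ y, exp (t * y) ∂gaussianReal 0 1 = exp (t ^ 2 / 2) := by
  simpa [mgf] using congrFun (mgf_id_gaussianReal (μ := 0) (v := 1)) t

instance isProbabilityMeasure_PTheta (N : ℕ) (θ : Fin N → Fin N → ℝ) :
    IsProbabilityMeasure (PTheta N θ) := by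
  unfold PTheta; infer_instance

lemma integrable_exp_sum_mul_PTheta_zero {N : ℕ} (c : Fin N → Fin N → ℝ) :
    Integrable (fun x => exp (∑ i, ∑ j, c i j * x i j)) (PTheta N 0) := by
  simp only [PTheta, Pi.zero_apply]
  exact integrable_exp_sum_pi (f := fun i (y : Fin N → ℝ) => ∑ j, c i j * y j) fun i =>
    integrable_exp_sum_pi (f := fun j (z : ℝ) => c i j * z) fun _ =>
      integrable_exp_mul_gaussianReal _

lemma integral_exp_sum_mul_PTheta_zero {N : ℕ} (c : Fin N → Fin N → ℝ) :
    ∫ x, exp (∑ i, ∑ j, c i j * x i j) ∂PTheta N 0 = exp (∑ i, ∑ j, c i j ^ 2 / 2) := by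
  simp only [PTheta, Pi.zero_apply]
  rw [integral_exp_sum_pi (f := fun i (y : Fin N → ℝ) => ∑ j, c i j * y j), Real.exp_sum]
  refine prod_congr rfl fun i _ => ?_
  rw [integral_exp_sum_pi (f := fun j (z : ℝ) => c i j * z), Real.exp_sum]
  exact prod_congr rfl fun j _ => integral_exp_mul_gaussianReal_zero_one _

section BoxIndicator

variable {ι : Type*} [DecidableEq ι]

def boxIndicator (R C : Finset ι) (i j : ι) : ℝ := if i ∈ R ∧ j ∈ C then 1 else 0

lemma sum_boxIndicator_mul [Fintype ι] (R C : Finset ι) (x : ι → ι → ℝ) :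
    ∑ i, ∑ j, boxIndicator R C i j * x i j = ∑ i ∈ R, ∑ j ∈ C, x i j := by
  simp [boxIndicator, ite_and, sum_ite_mem]

lemma boxIndicator_mul_boxIndicator (R C R' C' : Finset ι) (i j : ι) :
    boxIndicator R C i j * boxIndicator R' C' i j = boxIndicator (R ∩ R') (C ∩ C') i j := by
  simp only [boxIndicator, mem_inter]
  split_ifs <;> simp_all

lemma sum_boxIndicator_mul_boxIndicator [Fintype ι] (R C R' C' : Finset ι) :
    ∑ i, ∑ j, boxIndicator R C i j * boxIndicator R' C' i j = #(R ∩ R') * #(C ∩ C') := by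
  simpa [boxIndicator_mul_boxIndicator] using sum_boxIndicator_mul (R ∩ R') (C ∩ C') 1

end BoxIndicator

section Moments

variable {n N : ℕ}

lemma sum_SIdx {M : Type*} [AddCommMonoid M] (f : Finset (Fin N) → Finset (Fin N) → M) :
    ∑ S : SIdx n N, f S.1.1 S.1.2
      = ∑ R ∈ powersetCard n univ, ∑ C ∈ powersetCard n univ, f R C := by
  rw [← sum_product' (f := f)]
  exact (sum_subtype _ (fun _ => by simp)
    (fun p : Finset (Fin N) × Finset (Fin N) => f p.1 p.2)).symm

lemma card_SIdx : Fintype.card (SIdx n N) = N.choose n ^ 2 := by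
  rw [Fintype.card_eq_sum_ones, sum_SIdx fun _ _ => 1]
  simp [sq]

/-- `|S ∩ T|` for the product sets `S = R × C` and `T = R' × C'`. -/
def overlap (S T : SIdx n N) : ℕ := #(S.1.1 ∩ T.1.1) * #(S.1.2 ∩ T.1.2)

lemma XS_eq_sum_boxIndicator_mul (S : SIdx n N) (x : Fin N → Fin N → ℝ) :
    XS S x = ∑ i, ∑ j, boxIndicator S.1.1 S.1.2 i j * x i j :=
  (sum_boxIndicator_mul _ _ x).symm

lemma mul_XS_add_mul_XS (a b : ℝ) (S T : SIdx n N) (x : Fin N → Fin N → ℝ) :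
    a * XS S x + b * XS T x
      = ∑ i, ∑ j,
          (a * boxIndicator S.1.1 S.1.2 i j + b * boxIndicator T.1.1 T.1.2 i j) * x i j := by
  simp only [XS_eq_sum_boxIndicator_mul, mul_sum, ← sum_add_distrib, add_mul, mul_assoc]

lemma integrable_exp_mul_XS_add_mul_XS (a b : ℝ) (S T : SIdx n N) :
    Integrable (fun x => exp (a * XS S x + b * XS T x)) (PTheta N 0) := by
  simpa only [mul_XS_add_mul_XS] using integrable_exp_sum_mul_PTheta_zero _

lemma integral_exp_mul_XS_add_mul_XS (a b : ℝ) (S T : SIdx n N) :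
    ∫ x, exp (a * XS S x + b * XS T x) ∂PTheta N 0
      = exp ((a ^ 2 + b ^ 2) * n ^ 2 / 2 + a * b * overlap S T) := by
  simp only [mul_XS_add_mul_XS, integral_exp_sum_mul_PTheta_zero]
  congr 1
  set u := boxIndicator S.1.1 S.1.2
  set v := boxIndicator T.1.1 T.1.2
  have hsq : ∀ i j, (a * u i j + b * v i j) ^ 2 / 2
      = a ^ 2 / 2 * (u i j * u i j) + b ^ 2 / 2 * (v i j * v i j) + a * b * (u i j * v i j) :=
    fun i j => by ring
  simp only [hsq, sum_add_distrib, ← mul_sum, u, v, sum_boxIndicator_mul_boxIndicator, inter_self,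
    S.2.1, S.2.2, T.2.1, T.2.2, overlap]
  push_cast
  ring

end Moments

section LikelihoodRatio

variable {n N : ℕ}

lemma integrable_exp_mul_XS (a : ℝ) (S : SIdx n N) :
    Integrable (fun x => exp (a * XS S x)) (PTheta N 0) := by
  simpa using integrable_exp_mul_XS_add_mul_XS a 0 S S

lemma integral_exp_mul_XS (a : ℝ) (S : SIdx n N) :
    ∫ x, exp (a * XS S x) ∂PTheta N 0 = exp (a ^ 2 * n ^ 2 / 2) := by
  simpa using integral_exp_mul_XS_add_mul_XS a 0 S S

lemma integral_Lpi (hnN : n ≤ N) (A : ℝ) : ∫ x, Lpi n N A x ∂PTheta N 0 = 1 := by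
  have hchoose : (N.choose n : ℝ) ≠ 0 := by exact_mod_cast (Nat.choose_pos hnN).ne'
  simp only [Lpi, Real.exp_sub]
  rw [integral_const_mul, integral_finsetSum _ fun S _ => (integrable_exp_mul_XS A S).div_const _]
  simp only [integral_div, integral_exp_mul_XS, div_self (exp_pos _).ne', sum_const, card_univ,
    card_SIdx, nsmul_eq_mul, Nat.cast_pow, mul_one]
  exact inv_mul_cancel₀ (pow_ne_zero 2 hchoose)

lemma Lpi_sq_eq (A : ℝ) (x : Fin N → Fin N → ℝ) :
    Lpi n N A x ^ 2 = ((N.choose n : ℝ) ^ 2)⁻¹ ^ 2 *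
      ∑ S : SIdx n N, ∑ T : SIdx n N, exp (A * XS S x + A * XS T x) / exp (A ^ 2 * n ^ 2) := by
  rw [Lpi, mul_pow, sq (∑ S : SIdx n N, _), sum_mul_sum]
  congr 1
  refine sum_congr rfl fun S _ => sum_congr rfl fun T _ => ?_
  rw [← Real.exp_add, ← Real.exp_sub]
  ring_nf

lemma integrable_Lpi_sq (A : ℝ) : Integrable (fun x => Lpi n N A x ^ 2) (PTheta N 0) := by
  simp only [Lpi_sq_eq]
  exact (integrable_finsetSum _ fun S _ => integrable_finsetSum _ fun T _ =>
    (integrable_exp_mul_XS_add_mul_XS A A S T).div_const _).const_mul _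

lemma integral_Lpi_sq (A : ℝ) :
    ∫ x, Lpi n N A x ^ 2 ∂PTheta N 0
      = ((N.choose n : ℝ) ^ 2)⁻¹ ^ 2 * ∑ S : SIdx n N, ∑ T, exp (A ^ 2 * overlap S T) := by
  simp only [Lpi_sq_eq]
  rw [integral_const_mul, integral_finsetSum _ fun S _ => integrable_finsetSum _ fun T _ =>
    (integrable_exp_mul_XS_add_mul_XS A A S T).div_const _]
  congr 1
  refine sum_congr rfl fun S _ => ?_
  rw [integral_finsetSum _ fun T _ => (integrable_exp_mul_XS_add_mul_XS A A S T).div_const _]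
  refine sum_congr rfl fun T _ => ?_
  rw [integral_div, integral_exp_mul_XS_add_mul_XS, ← Real.exp_sub]
  ring_nf

lemma memLp_Lpi (A : ℝ) : MemLp (Lpi n N A) 2 (PTheta N 0) :=
  (memLp_two_iff_integrable_sq
    (Measurable.aestronglyMeasurable (by unfold Lpi XS; fun_prop))).2 (integrable_Lpi_sq A)

lemma variance_Lpi (hnN : n ≤ N) (A : ℝ) :
    variance (Lpi n N A) (PTheta N 0) = ∫ x, Lpi n N A x ^ 2 ∂PTheta N 0 - 1 := by
  rw [variance_eq_sub (memLp_Lpi A), integral_Lpi hnN, one_pow]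
  rfl

end LikelihoodRatio

lemma exp_sub_one_le_mul_exp (x : ℝ) : exp x - 1 ≤ x * exp x := by
  have h := mul_le_mul_of_nonneg_left (add_one_le_exp (-x)) (exp_pos x).le
  rw [mul_add, ← Real.exp_add, add_neg_cancel, exp_zero] at h
  linarith

section Counting

variable {α : Type*} [Fintype α] [DecidableEq α]

lemma card_filter_superset_powersetCard {K : Finset α} {n : ℕ} (hK : #K ≤ n) :
    #{R ∈ powersetCard n univ | K ⊆ R} = (Fintype.card α - #K).choose (n - #K) := by
  rw [← card_compl, ← card_powersetCard]
  refine card_nbij' (· \ K) (· ∪ K) ?_ ?_ ?_ ?_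
  · intro R hR
    simp only [coe_filter, mem_powersetCard_univ, Set.mem_ofPred_eq] at hR
    simp [card_sdiff_of_subset hR.2, hR.1]
  · intro T hT
    simp only [mem_coe, mem_powersetCard, subset_compl_iff_disjoint_right] at hT
    simp [card_union_of_disjoint hT.1, hT.2, hK]
  · intro R hR
    simp only [coe_filter, mem_powersetCard_univ, Set.mem_ofPred_eq] at hR
    exact sdiff_union_of_subset hR.2
  · intro T hT
    simp only [mem_coe, mem_powersetCard, subset_compl_iff_disjoint_right] at hT
    exact union_sdiff_cancel_right hT.1

lemma choose_card_eq_card_filter_subset (s : Finset α) (k : ℕ) :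
    (#s).choose k = #{K ∈ powersetCard k univ | K ⊆ s} := by
  rw [← card_powersetCard]
  congr 1
  ext K
  simp [mem_powersetCard, and_comm]

lemma sum_sum_choose_card_inter {n k : ℕ} (hk : k ≤ n) :
    ∑ R ∈ powersetCard n (univ : Finset α), ∑ R' ∈ powersetCard n univ, (#(R ∩ R')).choose k
      = (Fintype.card α).choose k * ((Fintype.card α - k).choose (n - k)) ^ 2 := by
  calc ∑ R ∈ powersetCard n (univ : Finset α), ∑ R' ∈ powersetCard n univ, (#(R ∩ R')).choose k
      = ∑ K ∈ powersetCard k univ,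
          #{R ∈ powersetCard n univ | K ⊆ R} * #{R' ∈ powersetCard n univ | K ⊆ R'} := by
        simp only [choose_card_eq_card_filter_subset, card_filter, sum_mul_sum,
          ite_zero_mul_ite_zero, mul_one, subset_inter_iff]
        rw [sum_congr rfl fun R _ => sum_comm, sum_comm]
    _ = ∑ K ∈ powersetCard k univ, ((Fintype.card α - k).choose (n - k)) ^ 2 := by
        refine sum_congr rfl fun K hK => ?_
        rw [mem_powersetCard_univ] at hK
        rw [card_filter_superset_powersetCard (hK ▸ hk), hK, sq]
    _ = (Fintype.card α).choose k * ((Fintype.card α - k).choose (n - k)) ^ 2 := by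
        rw [sum_const, card_powersetCard, card_univ, smul_eq_mul]

lemma one_add_pow_eq_sum_range_choose {R : Type*} [CommSemiring R] (u : R) {m n : ℕ}
    (hm : m ≤ n) : (1 + u) ^ m = ∑ k ∈ range (n + 1), (m.choose k : R) * u ^ k := by
  rw [add_comm, add_pow]
  refine sum_subset (range_subset_range.2 (by omega)) (fun k _ hk => ?_) |>.trans
    (sum_congr rfl fun k _ => by rw [one_pow, mul_one, mul_comm])
  rw [mem_range, not_lt] at hk
  simp [Nat.choose_eq_zero_of_lt (by omega : m < k)]

lemma descFactorial_mul_pow_le_descFactorial_mul_pow {n N : ℕ} (h : n ≤ N) (k : ℕ) :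
    n.descFactorial k * N ^ k ≤ N.descFactorial k * n ^ k := by
  induction k with
  | zero => simp
  | succ k ih =>
    have step : (n - k) * N ≤ (N - k) * n := by
      rw [Nat.sub_mul, Nat.sub_mul, mul_comm N n]
      exact Nat.sub_le_sub_left (Nat.mul_le_mul_left k h) _
    calc n.descFactorial (k + 1) * N ^ (k + 1) = (n - k) * N * (n.descFactorial k * N ^ k) := by
          rw [Nat.descFactorial_succ, pow_succ]; ring
      _ ≤ (N - k) * n * (N.descFactorial k * n ^ k) := Nat.mul_le_mul step ih
      _ = N.descFactorial (k + 1) * n ^ (k + 1) := by rw [Nat.descFactorial_succ, pow_succ]; ring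

lemma choose_mul_pow_le_choose_mul_pow {n N : ℕ} (h : n ≤ N) (k : ℕ) :
    n.choose k * N ^ k ≤ N.choose k * n ^ k := by
  have := descFactorial_mul_pow_le_descFactorial_mul_pow h k
  rw [Nat.descFactorial_eq_factorial_mul_choose, Nat.descFactorial_eq_factorial_mul_choose,
    mul_assoc, mul_assoc] at this
  exact Nat.le_of_mul_le_mul_left this (Nat.factorial_pos k)

lemma choose_mul_choose_sub_sq_mul_pow_le {k n N : ℕ} (hk : k ≤ n) (hn : n ≤ N) :
    N.choose k * (N - k).choose (n - k) ^ 2 * N ^ k ≤ N.choose n ^ 2 * n.choose k * n ^ k := by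
  have hid : N.choose n * n.choose k = N.choose k * (N - k).choose (n - k) := Nat.choose_mul hk
  have hb : (N - k).choose (n - k) * N ^ k ≤ N.choose n * n ^ k := by
    refine Nat.le_of_mul_le_mul_left ?_ (Nat.choose_pos hk)
    calc n.choose k * ((N - k).choose (n - k) * N ^ k)
        = n.choose k * N ^ k * (N - k).choose (n - k) := by ring
      _ ≤ N.choose k * n ^ k * (N - k).choose (n - k) :=
          Nat.mul_le_mul_right _ (choose_mul_pow_le_choose_mul_pow hn k)
      _ = n.choose k * (N.choose n * n ^ k) := by rw [mul_right_comm, ← hid]; ring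
  calc N.choose k * (N - k).choose (n - k) ^ 2 * N ^ k
      = N.choose n * n.choose k * ((N - k).choose (n - k) * N ^ k) := by rw [hid]; ring
    _ ≤ N.choose n * n.choose k * (N.choose n * n ^ k) := Nat.mul_le_mul_left _ hb
    _ = N.choose n ^ 2 * n.choose k * n ^ k := by ring

lemma sum_exp_mul_card_inter_le [Nonempty α] {n : ℕ} (hn : n ≤ Fintype.card α) {t : ℝ}
    (ht : 0 ≤ t) :
    ∑ R ∈ powersetCard n (univ : Finset α), ∑ R' ∈ powersetCard n univ, exp (t * #(R ∩ R'))
      ≤ ((Fintype.card α).choose n : ℝ) ^ 2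
          * exp ((n : ℝ) ^ 2 / Fintype.card α * (exp t - 1)) := by
  set N := Fintype.card α
  set u := exp t - 1
  have hu : 0 ≤ u := sub_nonneg.2 (one_le_exp ht)
  have hN : (0 : ℝ) < N := by exact_mod_cast Fintype.card_pos
  have hexp : ∀ m : ℕ, m ≤ n → exp (t * m) = ∑ k ∈ range (n + 1), (m.choose k : ℝ) * u ^ k :=
    fun m hm => by
      rw [← one_add_pow_eq_sum_range_choose u hm, add_sub_cancel, mul_comm, Real.exp_nat_mul]
  have hterm : ∀ k ∈ range (n + 1),
      ((N.choose k * (N - k).choose (n - k) ^ 2 : ℕ) : ℝ) * u ^ k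
        ≤ (N.choose n : ℝ) ^ 2 * ((n.choose k : ℝ) * (u * n / N) ^ k) := fun k hk => by
    have hcoeff : ((N.choose k * (N - k).choose (n - k) ^ 2 : ℕ) : ℝ)
        ≤ (N.choose n : ℝ) ^ 2 * n.choose k * (n / N) ^ k := by
      rw [div_pow, ← mul_div_assoc, le_div_iff₀ (by positivity)]
      exact_mod_cast choose_mul_choose_sub_sq_mul_pow_le (Nat.lt_succ_iff.1 (mem_range.1 hk)) hn
    calc _ ≤ (N.choose n : ℝ) ^ 2 * n.choose k * (n / N) ^ k * u ^ k := by gcongr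
      _ = _ := by ring_nf
  calc ∑ R ∈ powersetCard n (univ : Finset α), ∑ R' ∈ powersetCard n univ, exp (t * #(R ∩ R'))
      = ∑ k ∈ range (n + 1), ((N.choose k * (N - k).choose (n - k) ^ 2 : ℕ) : ℝ) * u ^ k := by
        have hinter : ∀ R ∈ powersetCard n (univ : Finset α), ∀ R', #(R ∩ R') ≤ n :=
          fun R hR R' => (mem_powersetCard_univ.1 hR) ▸ card_le_card inter_subset_left
        rw [sum_congr rfl fun R hR => sum_congr rfl fun R' _ => hexp _ (hinter R hR R'),
          sum_congr rfl fun R _ => sum_comm, sum_comm]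
        refine sum_congr rfl fun k hk => ?_
        simp only [← sum_mul, ← Nat.cast_sum,
          sum_sum_choose_card_inter (Nat.lt_succ_iff.1 (mem_range.1 hk))]
        rfl
    _ ≤ (N.choose n : ℝ) ^ 2 * ∑ k ∈ range (n + 1), (n.choose k : ℝ) * (u * n / N) ^ k := by
        rw [mul_sum]
        exact sum_le_sum hterm
    _ = (N.choose n : ℝ) ^ 2 * (1 + u * n / N) ^ n := by
        rw [one_add_pow_eq_sum_range_choose _ le_rfl]
    _ ≤ (N.choose n : ℝ) ^ 2 * exp (u * n / N) ^ n := by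
        gcongr
        linarith [add_one_le_exp (u * n / N)]
    _ = (N.choose n : ℝ) ^ 2 * exp ((n : ℝ) ^ 2 / N * u) := by
        rw [← Real.exp_nat_mul]
        ring_nf

lemma sum_exp_mul_card_inter_le_of_le_one [Nonempty α] {n : ℕ} (hn : n ≤ Fintype.card α) {t : ℝ}
    (ht₀ : 0 ≤ t) (ht₁ : t ≤ 1) :
    ∑ R ∈ powersetCard n (univ : Finset α), ∑ R' ∈ powersetCard n univ, exp (t * #(R ∩ R'))
      ≤ ((Fintype.card α).choose n : ℝ) ^ 2
          * exp (exp 1 * ((n : ℝ) ^ 2 / Fintype.card α) * t) := by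
  refine (sum_exp_mul_card_inter_le hn ht₀).trans
    (mul_le_mul_of_nonneg_left (exp_le_exp.2 ?_) (by positivity))
  calc (n : ℝ) ^ 2 / Fintype.card α * (exp t - 1)
      ≤ (n : ℝ) ^ 2 / Fintype.card α * (t * exp 1) := by
        gcongr
        exact (exp_sub_one_le_mul_exp t).trans (by gcongr)
    _ = exp 1 * ((n : ℝ) ^ 2 / Fintype.card α) * t := by ring

end Counting

section SecondMoment

variable {n N : ℕ}

lemma sum_sum_overlap {M : Type*} [AddCommMonoid M] (g : ℕ → M) :
    ∑ S : SIdx n N, ∑ T : SIdx n N, g (overlap S T)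
      = ∑ R ∈ powersetCard n (univ : Finset (Fin N)), ∑ R' ∈ powersetCard n univ,
          ∑ C ∈ powersetCard n (univ : Finset (Fin N)), ∑ C' ∈ powersetCard n univ,
            g (#(R ∩ R') * #(C ∩ C')) :=
  (sum_SIdx fun R C => ∑ T : SIdx n N, g (#(R ∩ T.1.1) * #(C ∩ T.1.2))).trans
    (sum_congr rfl fun R _ => (sum_congr rfl fun C _ =>
      sum_SIdx fun R' C' => g (#(R ∩ R') * #(C ∩ C'))).trans sum_comm)

lemma sum_exp_mul_overlap_le (hN : 0 < N) (hnN : n ≤ N) {A : ℝ} (hA : A ^ 2 * n ≤ 1) :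
    ∑ S : SIdx n N, ∑ T : SIdx n N, exp (A ^ 2 * overlap S T)
      ≤ (N.choose n : ℝ) ^ 2 * ((N.choose n : ℝ) ^ 2 *
          exp ((n : ℝ) ^ 2 / N * (exp (exp 1 * A ^ 2 * ((n : ℝ) ^ 2 / N)) - 1))) := by
  have : Nonempty (Fin N) := ⟨⟨0, hN⟩⟩
  have hnN' : n ≤ Fintype.card (Fin N) := by simpa using hnN
  have hrow : ∀ R ∈ powersetCard n (univ : Finset (Fin N)), ∀ R' : Finset (Fin N),
      ∑ C ∈ powersetCard n (univ : Finset (Fin N)), ∑ C' ∈ powersetCard n univ,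
          exp (A ^ 2 * ((#(R ∩ R') * #(C ∩ C') : ℕ) : ℝ))
        ≤ (N.choose n : ℝ) ^ 2 * exp (exp 1 * A ^ 2 * ((n : ℝ) ^ 2 / N) * #(R ∩ R')) :=
    fun R hR R' => by
      have ha : #(R ∩ R') ≤ n := (mem_powersetCard_univ.1 hR) ▸ card_le_card inter_subset_left
      have ht : A ^ 2 * #(R ∩ R') ≤ 1 :=
        (mul_le_mul_of_nonneg_left (by exact_mod_cast ha) (sq_nonneg A)).trans hA
      convert sum_exp_mul_card_inter_le_of_le_one hnN' (by positivity) ht using 3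
      · push_cast; ring_nf
      · simp
      · simp; ring
  rw [sum_sum_overlap fun m => exp (A ^ 2 * m)]
  calc _ ≤ ∑ R ∈ powersetCard n (univ : Finset (Fin N)), ∑ R' ∈ powersetCard n univ,
          (N.choose n : ℝ) ^ 2 * exp (exp 1 * A ^ 2 * ((n : ℝ) ^ 2 / N) * #(R ∩ R')) :=
        sum_le_sum fun R hR => sum_le_sum fun R' _ => hrow R hR R'
    _ ≤ _ := by
        simp only [← mul_sum]
        gcongr
        have hs : 0 ≤ exp 1 * A ^ 2 * ((n : ℝ) ^ 2 / N) := by positivity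
        simpa using sum_exp_mul_card_inter_le hnN' hs

lemma integral_Lpi_sq_le (hN : 0 < N) (hnN : n ≤ N) {A : ℝ} (hA : A ^ 2 * n ≤ 1) :
    ∫ x, Lpi n N A x ^ 2 ∂PTheta N 0
      ≤ exp (A ^ 2 * ((n : ℝ) ^ 2 / N) ^ 2 * exp (1 + exp 1 * A ^ 2 * ((n : ℝ) ^ 2 / N))) := by
  set q : ℝ := (n : ℝ) ^ 2 / N
  set s := exp 1 * A ^ 2 * q
  have hchoose : (N.choose n : ℝ) ≠ 0 := by exact_mod_cast (Nat.choose_pos hnN).ne'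
  have hexponent : q * (exp s - 1) ≤ A ^ 2 * q ^ 2 * exp (1 + s) := by
    calc q * (exp s - 1) ≤ q * (s * exp s) := by gcongr; exact exp_sub_one_le_mul_exp s
      _ = A ^ 2 * q ^ 2 * exp (1 + s) := by rw [Real.exp_add]; ring
  rw [integral_Lpi_sq]
  calc _ ≤ ((N.choose n : ℝ) ^ 2)⁻¹ ^ 2 * ((N.choose n : ℝ) ^ 2 * ((N.choose n : ℝ) ^ 2 *
          exp (q * (exp s - 1)))) := by gcongr; exact sum_exp_mul_overlap_le hN hnN hA
    _ = exp (q * (exp s - 1)) := by field_simp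
    _ ≤ _ := exp_le_exp.2 hexponent

end SecondMoment

section DenseRegime

variable {x α δ : ℝ}

lemma div_two_le_natFloor (hx : 1 ≤ x) : x / 2 ≤ ⌊x⌋₊ := by
  have h1 : (1 : ℝ) ≤ ⌊x⌋₊ := by exact_mod_cast (Nat.one_le_floor_iff x).2 hx
  linarith [Nat.lt_floor_add_one x]

lemma sq_div_natFloor_rpow_le (hx : 1 ≤ x) (hα : 0 ≤ α) :
    x ^ 2 / ⌊x ^ (1 + α)⌋₊ ≤ 2 * x ^ (1 - α) := by
  have hx0 : 0 < x := by linarith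
  have hpow : 1 ≤ x ^ (1 + α) := one_le_rpow hx (by linarith)
  calc x ^ 2 / ⌊x ^ (1 + α)⌋₊ ≤ x ^ 2 / (x ^ (1 + α) / 2) := by
        gcongr
        exact div_two_le_natFloor hpow
    _ = 2 * x ^ (1 - α) := by
        rw [div_div_eq_mul_div, mul_comm, mul_div_assoc, ← rpow_natCast, ← rpow_sub hx0]
        norm_num
        ring_nf

lemma sq_mul_self_le_one {A : ℝ} (hx : 1 ≤ x) (hαδ : α + δ ≤ 1 / 2)
    (hA : A ^ 2 = x ^ (2 * (α + δ) - 2)) : A ^ 2 * x ≤ 1 := by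
  rw [hA, ← rpow_add_one (by linarith)]
  exact rpow_le_one_of_one_le_of_nonpos hx (by linarith)

lemma sq_mul_sq_mul_exp_le {A q : ℝ} (hx : 1 ≤ x) (hα : 0 ≤ α) (hαδ : α + δ ≤ 1 / 2)
    (hA : A ^ 2 = x ^ (2 * (α + δ) - 2)) (hq0 : 0 ≤ q) (hq : q ≤ 2 * x ^ (1 - α)) :
    A ^ 2 * q ^ 2 * exp (1 + exp 1 * A ^ 2 * q) ≤ 4 * exp (1 + 2 * exp 1) * x ^ (2 * δ) := by
  have hx0 : 0 < x := by linarith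
  have hAq : A ^ 2 * q ≤ 2 := by
    calc A ^ 2 * q ≤ A ^ 2 * (2 * x ^ (1 - α)) := by gcongr
      _ = 2 * x ^ (α + 2 * δ - 1) := by rw [hA, mul_left_comm, ← rpow_add hx0]; ring_nf
      _ ≤ 2 * 1 := by gcongr; exact rpow_le_one_of_one_le_of_nonpos hx (by linarith)
      _ = 2 := mul_one 2
  have hAq2 : A ^ 2 * q ^ 2 ≤ 4 * x ^ (2 * δ) := by
    calc A ^ 2 * q ^ 2 ≤ A ^ 2 * (2 * x ^ (1 - α)) ^ 2 := by gcongr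
      _ = 4 * x ^ (2 * δ) := by
          rw [hA, mul_pow, ← rpow_natCast (x ^ (1 - α)), ← rpow_mul hx0.le, mul_left_comm,
            ← rpow_add hx0]
          ring_nf
  calc A ^ 2 * q ^ 2 * exp (1 + exp 1 * A ^ 2 * q)
      ≤ 4 * x ^ (2 * δ) * exp (1 + exp 1 * 2) := by
        rw [mul_assoc (exp 1)]
        gcongr
    _ = 4 * exp (1 + 2 * exp 1) * x ^ (2 * δ) := by ring_nf

end DenseRegime

/-- **Second moment bound in the dense below-boundary regime.**  There is an absolute
constant C < ∞ such that for all α > 0 and δ ∈ (−1, ∞) with α + δ ≤ 1/2, and every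
integer n ≥ 2, with `N = ⌊n^{1+α}⌋` and `A = n^{−(1−α−δ)}`:
`E₀(L_π²) ≤ exp(C n^{2δ})`, hence `Var₀(L_π) ≤ exp(C n^{2δ}) − 1`. -/
theorem second_moment_dense_below :
    ∃ C : ℝ, 0 < C ∧ ∀ α δ : ℝ, 0 < α → -1 < δ → α + δ ≤ 1 / 2 →
      ∀ n : ℕ, 2 ≤ n →
        (∫ x, (Lpi n ⌊(n : ℝ) ^ (1 + α)⌋₊ ((n : ℝ) ^ (-(1 - α - δ))) x) ^ 2
            ∂(PTheta ⌊(n : ℝ) ^ (1 + α)⌋₊ 0)) ≤ Real.exp (C * (n : ℝ) ^ (2 * δ)) ∧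
        variance (Lpi n ⌊(n : ℝ) ^ (1 + α)⌋₊ ((n : ℝ) ^ (-(1 - α - δ))))
            (PTheta ⌊(n : ℝ) ^ (1 + α)⌋₊ 0) ≤ Real.exp (C * (n : ℝ) ^ (2 * δ)) - 1 := by
  refine ⟨4 * exp (1 + 2 * exp 1), by positivity, fun α δ hα _ hαδ n hn => ?_⟩
  have hn1 : (1 : ℝ) ≤ n := by exact_mod_cast (by omega : 1 ≤ n)
  have hnN : n ≤ ⌊(n : ℝ) ^ (1 + α)⌋₊ :=
    Nat.le_floor (self_le_rpow_of_one_le hn1 (by linarith))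
  have hA : ((n : ℝ) ^ (-(1 - α - δ))) ^ 2 = (n : ℝ) ^ (2 * (α + δ) - 2) := by
    rw [← rpow_natCast, ← rpow_mul (by positivity)]
    ring_nf
  have hsecond := (integral_Lpi_sq_le (by omega) hnN (sq_mul_self_le_one hn1 hαδ hA)).trans
    (exp_le_exp.2 (sq_mul_sq_mul_exp_le hn1 hα.le hαδ hA (by positivity)
      (sq_div_natFloor_rpow_le hn1 hα.le)))
  exact ⟨hsecond, by rw [variance_Lpi hnN]; linarith⟩
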